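/- If |ε_j| ≤ 1 for all j, where ε_j = |φ(A_j)| + log_n p(A_j), then the redundancy satisfies R ≤ N̄^{-1} ( δ / ln n + (n ln n / 2) Σ_j p(A_j) ε_j² ), where δ = 1 - Σ_j n^{-|φ(A_j)|}. -/

import Mathlib

open scoped BigOperators

/-- Probability of a word: product of the letter probabilities. -/
def wordProb {m : ℕ} (p : Fin m → ℝ) (A : List (Fin m)) : ℝ := (A.map p).prod


lemma g_antitone : Antitone (fun u : ℝ => (1 - u) * Real.exp u + u ^ 2 / 2) := by
  have key : ∀ x : ℝ, HasDerivAt (fun u : ℝ => (1 - u) * Real.exp u + u ^ 2 / 2)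
      (x * (1 - Real.exp x)) x := by
    intro x
    have h1 : HasDerivAt (fun u : ℝ => (1 - u) * Real.exp u)
        ((0 - 1) * Real.exp x + (1 - x) * Real.exp x) x :=
      ((hasDerivAt_const x (1:ℝ)).sub (hasDerivAt_id x)).mul (Real.hasDerivAt_exp x)
    have h2 : HasDerivAt (fun u : ℝ => u ^ 2 / 2) (2 * x ^ 1 / 2) x :=
      (hasDerivAt_pow 2 x).div_const 2
    have := h1.add h2
    exact this.congr_deriv (by ring)
  apply antitone_of_deriv_nonpos
  · intro x; exact (key x).differentiableAt
  · intro x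
    rw [(key x).deriv]
    rcases le_or_gt x 0 with h | h
    · have : 1 ≤ Real.exp x ∨ Real.exp x ≤ 1 := le_total 1 _
      have he : Real.exp x ≤ 1 := Real.exp_le_one_iff.mpr h
      nlinarith
    · have he : 1 ≤ Real.exp x := Real.one_le_exp h.le
      nlinarith

lemma h_antitone : Antitone (fun u : ℝ => 1 + u + u ^ 2 / 2 - Real.exp u) := by
  have key : ∀ x : ℝ, HasDerivAt (fun u : ℝ => 1 + u + u ^ 2 / 2 - Real.exp u)
      (1 + x - Real.exp x) x := by
    intro x
    have h1 : HasDerivAt (fun u : ℝ => 1 + u) (0 + 1) x :=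
      (hasDerivAt_const x (1:ℝ)).add (hasDerivAt_id x)
    have h2 : HasDerivAt (fun u : ℝ => u ^ 2 / 2) (2 * x ^ 1 / 2) x :=
      (hasDerivAt_pow 2 x).div_const 2
    have := (h1.add h2).sub (Real.hasDerivAt_exp x)
    exact this.congr_deriv (by ring)
  apply antitone_of_deriv_nonpos
  · intro x; exact (key x).differentiableAt
  · intro x; rw [(key x).deriv]
    have := Real.add_one_le_exp x
    linarith

/-- For `s ≤ log b`, `exp s ≤ 1 + s + (b/2) s²`. -/
lemma exp_quad {b s : ℝ} (hb : 2 ≤ b) (hs : s ≤ Real.log b) :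
    Real.exp s ≤ 1 + s + b / 2 * s ^ 2 := by
  rcases le_or_gt s 0 with h | h
  · have := h_antitone h
    simp only [Real.exp_zero] at this
    nlinarith [sq_nonneg s]
  · have hg := g_antitone (neg_nonpos_of_nonneg h.le)
    simp only [Real.exp_zero] at hg
    have hes : Real.exp s ≤ b := by
      calc Real.exp s ≤ Real.exp (Real.log b) := Real.exp_le_exp.mpr hs
      _ = b := Real.exp_log (by linarith)
    have hne : Real.exp (-s) = (Real.exp s)⁻¹ := Real.exp_neg s
    have hpos : 0 < Real.exp s := Real.exp_pos s
    rw [hne] at hg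
    have hg' : (1 - (-s)) * (Real.exp s)⁻¹ + (-s) ^ 2 / 2 ≥ 1 := by simpa using hg
    have hinv : Real.exp s * (Real.exp s)⁻¹ = 1 := mul_inv_cancel₀ hpos.ne'
    nlinarith [sq_nonneg s, mul_pos hpos hpos]

lemma pointwise_bound {b ε : ℝ} (hb : 2 ≤ b) (hε : |ε| ≤ 1) :
    ε ≤ (1 - b ^ (-ε)) / Real.log b + b * Real.log b / 2 * ε ^ 2 := by
  have hb1 : (1:ℝ) < b := by linarith
  have hlog : 0 < Real.log b := Real.log_pos hb1
  have hrw : b ^ (-ε) = Real.exp (-(ε * Real.log b)) := by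
    rw [Real.rpow_def_of_pos (by linarith)]; ring_nf
  have hs : -(ε * Real.log b) ≤ Real.log b := by
    have h1 : -ε ≤ 1 := by linarith [(abs_le.mp hε).1]
    nlinarith
  have hq := exp_quad hb hs
  rw [← mul_le_mul_iff_right₀ hlog, mul_add, mul_div_cancel₀ _ hlog.ne']
  rw [hrw]
  nlinarith [sq_nonneg ε, sq_nonneg (Real.log b)]


lemma wordProb_nil {m : ℕ} (p : Fin m → ℝ) : wordProb p [] = 1 := rfl

lemma wordProb_cons {m : ℕ} (p : Fin m → ℝ) (a : Fin m) (t : List (Fin m)) :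
    wordProb p (a :: t) = p a * wordProb p t := by simp [wordProb]

lemma wordProb_pos {m : ℕ} {p : Fin m → ℝ} (hp : ∀ i, 0 < p i) (A : List (Fin m)) :
    0 < wordProb p A := by
  apply List.prod_pos
  intro x hx
  obtain ⟨a, _, rfl⟩ := List.mem_map.mp hx
  exact hp a

/-- Kraft-type inequality for the source: a prefix-free set of words has total
probability at most 1. -/
lemma prefixfree_sum_le {m : ℕ} (hm : 0 < m) (p : Fin m → ℝ) (hp : ∀ i, 0 ≤ p i)
    (hsum : ∑ i, p i = 1) :
    ∀ (L : ℕ) (S : Finset (List (Fin m))), (∀ A ∈ S, A.length ≤ L) →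
      (∀ A ∈ S, ∀ B ∈ S, A <+: B → A = B) → ∑ A ∈ S, wordProb p A ≤ 1 := by
  haveI : Inhabited (Fin m) := ⟨⟨0, hm⟩⟩
  intro L
  induction L with
  | zero =>
    intro S hlen _
    have hsub : S ⊆ {([] : List (Fin m))} := by
      intro A hA
      simp only [Finset.mem_singleton]
      exact List.length_eq_zero_iff.mp (Nat.le_zero.mp (hlen A hA))
    calc ∑ A ∈ S, wordProb p A ≤ ∑ A ∈ {([] : List (Fin m))}, wordProb p A := by
          apply Finset.sum_le_sum_of_subset_of_nonneg hsub
          intro A _ _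
          exact List.prod_nonneg (by rintro x hx; obtain ⟨a, _, rfl⟩ := List.mem_map.mp hx; exact hp a)
      _ = 1 := by simp [wordProb_nil]
  | succ L IH =>
    intro S hlen hpf
    by_cases h0 : ([] : List (Fin m)) ∈ S
    · have : S = {([] : List (Fin m))} := by
        apply Finset.eq_singleton_iff_unique_mem.mpr
        exact ⟨h0, fun B hB => (hpf _ h0 _ hB (List.nil_prefix)).symm⟩
      rw [this]; simp [wordProb_nil]
    · classical
      -- fiber over the first letter
      rw [← Finset.sum_fiberwise S (fun A => A.head!) (wordProb p)]
      have key : ∀ a : Fin m,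
          ∑ A ∈ S.filter (fun A => A.head! = a), wordProb p A ≤ p a := by
        intro a
        set T : Finset (List (Fin m)) :=
          (S.filter (fun A => A.head! = a)).image List.tail with hT
        have hcons : ∀ A ∈ S.filter (fun A => A.head! = a), A = a :: A.tail := by
          intro A hA
          obtain ⟨hAS, hhd⟩ := Finset.mem_filter.mp hA
          have hAne : A ≠ [] := fun h => h0 (h ▸ hAS)
          conv_lhs => rw [← List.cons_head!_tail hAne]
          rw [hhd]
        have hinj : Set.InjOn (List.tail : List (Fin m) → List (Fin m)) ↑(S.filter (fun A => A.head! = a)) := by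
          intro A hA B hB htl
          rw [hcons A hA, hcons B hB, htl]
        have hsumT : ∑ A ∈ S.filter (fun A => A.head! = a), wordProb p A
            = p a * ∑ t ∈ T, wordProb p t := by
          rw [hT, Finset.sum_image (fun A hA B hB => hinj hA hB), Finset.mul_sum]
          apply Finset.sum_congr rfl
          intro A hA
          conv_lhs => rw [hcons A hA]
          rw [wordProb_cons]
        rw [hsumT]
        have hTle : ∑ t ∈ T, wordProb p t ≤ 1 := by
          apply IH
          · intro t ht
            obtain ⟨A, hA, rfl⟩ := Finset.mem_image.mp ht
            have := hlen A (Finset.mem_filter.mp hA).1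
            have : A.length ≤ L + 1 := this
            cases A with
            | nil => simp
            | cons x xs => simpa using this
          · intro t ht u hu htu
            obtain ⟨A, hA, rfl⟩ := Finset.mem_image.mp ht
            obtain ⟨B, hB, rfl⟩ := Finset.mem_image.mp hu
            have hAB : A <+: B := by
              rw [hcons A hA, hcons B hB]
              exact (List.prefix_cons_inj a).mpr htu
            have := hpf A (Finset.mem_filter.mp hA).1 B (Finset.mem_filter.mp hB).1 hAB
            rw [this]
        calc p a * ∑ t ∈ T, wordProb p t ≤ p a * 1 :=
              mul_le_mul_of_nonneg_left hTle (hp a)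
          _ = p a := mul_one _
      calc ∑ a : Fin m, ∑ A ∈ S.filter (fun A => A.head! = a), wordProb p A
          ≤ ∑ a : Fin m, p a := Finset.sum_le_sum (fun a _ => key a)
        _ = 1 := hsum


/-- Upper bound of Theorem 1: if `|ε_j| ≤ 1` for all `j`, where
`ε_j = |φ(A_j)| + log_n p(A_j)`, then
`R ≤ N̄⁻¹ (δ / ln n + (n ln n / 2) Σ_j p(A_j) ε_j²)`. -/
theorem redundancy_upper_bound {m n : ℕ} (hm : 2 ≤ m) (hn : 2 ≤ n)
    (p : Fin m → ℝ) (hp : ∀ i, 0 < p i) (hsum : ∑ i, p i = 1)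
    (S : Finset (List (Fin m)))
    (hne : ∀ A ∈ S, A ≠ ([] : List (Fin m)))
    (hpf : ∀ A ∈ S, ∀ B ∈ S, A <+: B → A = B)
    (hcomp : ∀ x : ℕ → Fin m, ∃ k : ℕ, List.ofFn (fun i : Fin k => x i) ∈ S)
    (ℓ : List (Fin m) → ℕ)
    (hkraft : ∑ A ∈ S, (n : ℝ) ^ (-(ℓ A : ℝ)) ≤ 1)
    (hε : ∀ A ∈ S, |(ℓ A : ℝ) + Real.logb n (wordProb p A)| ≤ 1) :
    (∑ A ∈ S, wordProb p A * A.length)⁻¹ *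
        ∑ A ∈ S, wordProb p A * ((ℓ A : ℝ) + Real.logb n (wordProb p A)) ≤
      (∑ A ∈ S, wordProb p A * A.length)⁻¹ *
        ((1 - ∑ A ∈ S, (n : ℝ) ^ (-(ℓ A : ℝ))) / Real.log n +
          (n : ℝ) * Real.log n / 2 *
            ∑ A ∈ S, wordProb p A *
              ((ℓ A : ℝ) + Real.logb n (wordProb p A)) ^ 2) := by
  have hnR : (2:ℝ) ≤ (n:ℝ) := by exact_mod_cast hn
  have hn1 : (1:ℝ) < (n:ℝ) := by linarith
  have hlog : 0 < Real.log n := Real.log_pos hn1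
  set ε : List (Fin m) → ℝ := fun A => (ℓ A : ℝ) + Real.logb n (wordProb p A) with hεdef
  -- rewrite n^{-ℓ A} = wordProb A * n^{-ε A}
  have hrpow : ∀ A ∈ S, (n : ℝ) ^ (-(ℓ A : ℝ)) = wordProb p A * (n : ℝ) ^ (-(ε A)) := by
    intro A _
    have hq := wordProb_pos hp A
    have : (n : ℝ) ^ (-(ε A)) = (n : ℝ) ^ (-(ℓ A : ℝ)) * (wordProb p A)⁻¹ := by
      rw [hεdef]
      simp only [neg_add]
      rw [Real.rpow_add (by linarith), Real.rpow_neg (by linarith : (0:ℝ) ≤ (n:ℝ))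
        (Real.logb n (wordProb p A)), Real.rpow_logb (by linarith) (by linarith) hq]
    rw [this]
    field_simp
  -- pointwise inequality multiplied by the probability
  have hpt : ∀ A ∈ S, wordProb p A * ε A ≤
      (wordProb p A - (n : ℝ) ^ (-(ℓ A : ℝ))) / Real.log n +
        (n : ℝ) * Real.log n / 2 * (wordProb p A * (ε A) ^ 2) := by
    intro A hA
    have hq := wordProb_pos hp A
    have hb := pointwise_bound hnR (hε A hA)
    have := mul_le_mul_of_nonneg_left hb hq.le
    calc wordProb p A * ε A
        ≤ wordProb p A * ((1 - (n:ℝ) ^ (-(ε A))) / Real.log n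
            + (n:ℝ) * Real.log n / 2 * (ε A) ^ 2) := this
      _ = (wordProb p A - wordProb p A * (n:ℝ) ^ (-(ε A))) / Real.log n
            + (n:ℝ) * Real.log n / 2 * (wordProb p A * (ε A) ^ 2) := by ring
      _ = (wordProb p A - (n : ℝ) ^ (-(ℓ A : ℝ))) / Real.log n
            + (n:ℝ) * Real.log n / 2 * (wordProb p A * (ε A) ^ 2) := by
          rw [hrpow A hA]
  -- sum of probabilities is at most 1
  have hPle : ∑ A ∈ S, wordProb p A ≤ 1 :=
    prefixfree_sum_le (by omega) p (fun i => (hp i).le) hsum (S.sup List.length) S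
      (fun A hA => Finset.le_sup hA) hpf
  -- the inner inequality
  have hinner : ∑ A ∈ S, wordProb p A * ε A ≤
      (1 - ∑ A ∈ S, (n : ℝ) ^ (-(ℓ A : ℝ))) / Real.log n +
        (n : ℝ) * Real.log n / 2 * ∑ A ∈ S, wordProb p A * (ε A) ^ 2 := by
    calc ∑ A ∈ S, wordProb p A * ε A
        ≤ ∑ A ∈ S, ((wordProb p A - (n : ℝ) ^ (-(ℓ A : ℝ))) / Real.log n +
            (n : ℝ) * Real.log n / 2 * (wordProb p A * (ε A) ^ 2)) :=
          Finset.sum_le_sum hpt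
      _ = (∑ A ∈ S, wordProb p A - ∑ A ∈ S, (n : ℝ) ^ (-(ℓ A : ℝ))) / Real.log n +
            (n : ℝ) * Real.log n / 2 * ∑ A ∈ S, wordProb p A * (ε A) ^ 2 := by
          rw [Finset.sum_add_distrib, ← Finset.mul_sum, ← Finset.sum_div,
            Finset.sum_sub_distrib]
      _ ≤ (1 - ∑ A ∈ S, (n : ℝ) ^ (-(ℓ A : ℝ))) / Real.log n +
            (n : ℝ) * Real.log n / 2 * ∑ A ∈ S, wordProb p A * (ε A) ^ 2 := by
          gcongr
  -- multiply by the nonnegative factor N̄⁻¹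
  have hNnonneg : 0 ≤ (∑ A ∈ S, wordProb p A * A.length)⁻¹ := by
    apply inv_nonneg.mpr
    apply Finset.sum_nonneg
    intro A _
    exact mul_nonneg (wordProb_pos hp A).le (Nat.cast_nonneg _)
  exact mul_le_mul_of_nonneg_left hinner hNnonneg
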